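/- arXiv:1303.5617 — 2 statements merged into one kernel-verified Lean document; each statement's English description precedes it below -/
import Mathlib

section
/- If ν is a multiplicative arithmetic function with ∑_{p : ν(p)=0} 1/p < ∞, then its Dirichlet inverse ν^{-1} is multiplicative and supp(ν^{-1}) has positive asymptotic density. -/
open Filter Topology ArithmeticFunction

/-- Number of elements of `A` in `[1, N]`. -/
noncomputable def cnt (A : Set ℕ) (N : ℕ) : ℕ := (A ∩ Set.Icc 1 N).ncard

/-- `A ⊆ ℕ` has asymptotic density `d`. -/
def HasDensity (A : Set ℕ) (d : ℝ) : Prop :=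
  Filter.Tendsto (fun N : ℕ => (cnt A N : ℝ) / N) Filter.atTop (nhds d)

/-- `A` is thin: the sum of the reciprocals of its elements converges. -/
def Thin (A : Set ℕ) : Prop := Summable (fun a : A => (1 : ℝ) / a)

open Finset

section Mult
variable (w : ArithmeticFunction ℂ)

/-- multiplicative extension of values on prime powers -/
noncomputable def mext : ArithmeticFunction ℂ :=
  ⟨fun n => if n = 0 then 0 else n.factorization.prod fun p k => w (p ^ k), by simp⟩

lemma mext_apply {n : ℕ} (hn : n ≠ 0) :
    mext w n = n.factorization.prod fun p k => w (p ^ k) := by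
  simp [mext, hn, ArithmeticFunction.coe_mk]

lemma mext_isMultiplicative (hw1 : w 1 = 1) : (mext w).IsMultiplicative := by
  rw [ArithmeticFunction.IsMultiplicative.iff_ne_zero]
  constructor
  · rw [mext_apply w one_ne_zero]; simp
  · intro m n hm hn hmn
    rw [mext_apply w hm, mext_apply w hn, mext_apply w (mul_ne_zero hm hn),
      Nat.factorization_mul_of_coprime hmn]
    exact Finsupp.prod_add_index_of_disjoint (by
      rw [Nat.support_factorization, Nat.support_factorization]
      exact Nat.Coprime.disjoint_primeFactors hmn) _

lemma mext_prime_pow (hw1 : w 1 = 1) {p : ℕ} (hp : p.Prime) (k : ℕ) :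
    mext w (p ^ k) = w (p ^ k) := by
  rw [mext_apply w (pow_ne_zero k hp.pos.ne'), hp.factorization_pow]
  rw [Finsupp.prod_single_index]
  simp [hw1]
end Mult


noncomputable def cntF (A : Set ℕ) (N : ℕ) : Finset ℕ :=
  @Finset.filter ℕ (fun n => n ∈ A) (Classical.decPred _) (Finset.Icc 1 N)

lemma mem_cntF {A : Set ℕ} {N n : ℕ} : n ∈ cntF A N ↔ n ∈ A ∧ 1 ≤ n ∧ n ≤ N := by
  classical
  simp [cntF, Finset.mem_filter, Finset.mem_Icc, and_comm]

lemma cnt_eq (A : Set ℕ) (N : ℕ) : (cnt A N : ℝ) = ((cntF A N).card : ℝ) := by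
  classical
  have h : A ∩ Set.Icc 1 N = ↑(cntF A N) := by
    ext n
    constructor
    · rintro ⟨h1, h2⟩
      exact Finset.mem_coe.mpr (mem_cntF.mpr ⟨h1, h2.1, h2.2⟩)
    · intro h
      obtain ⟨hA, h1, h2⟩ := mem_cntF.mp (Finset.mem_coe.mp h)
      exact ⟨hA, h1, h2⟩
  rw [cnt, h, Set.ncard_coe_finset]

lemma cntF_card_le (A : Set ℕ) (N : ℕ) : (cntF A N).card ≤ N := by
  classical
  calc (cntF A N).card ≤ (Finset.Icc 1 N).card := Finset.card_filter_le _ _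
  _ = N := by rw [Nat.card_Icc]; omega

lemma cnt_split {A B : Set ℕ} {F : Finset ℕ} {D : ℕ → Set ℕ}
    (h : ∀ n, 1 ≤ n → n ∈ A → n ∈ B ∨ ∃ q ∈ F, n ∈ D q) (N : ℕ) :
    (cntF A N).card ≤ (cntF B N).card + ∑ q ∈ F, (cntF (D q) N).card := by
  classical
  have hsub : cntF A N ⊆ cntF B N ∪ F.biUnion (fun q => cntF (D q) N) := by
    intro n hn
    obtain ⟨hA, h1, h2⟩ := mem_cntF.mp hn
    rcases h n h1 hA with hB | ⟨q, hq, hD⟩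
    · exact Finset.mem_union_left _ (mem_cntF.mpr ⟨hB, h1, h2⟩)
    · exact Finset.mem_union_right _ (Finset.mem_biUnion.mpr ⟨q, hq, mem_cntF.mpr ⟨hD, h1, h2⟩⟩)
  calc (cntF A N).card ≤ (cntF B N ∪ F.biUnion (fun q => cntF (D q) N)).card :=
        Finset.card_le_card hsub
  _ ≤ (cntF B N).card + (F.biUnion (fun q => cntF (D q) N)).card := Finset.card_union_le _ _
  _ ≤ _ := by exact Nat.add_le_add_left (Finset.card_biUnion_le) _

lemma cnt_mono {A B : Set ℕ} (h : ∀ n, 1 ≤ n → n ∈ A → n ∈ B) (N : ℕ) :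
    (cntF A N).card ≤ (cntF B N).card := by
  apply Finset.card_le_card
  intro n hn
  obtain ⟨hA, h1, h2⟩ := mem_cntF.mp hn
  exact mem_cntF.mpr ⟨h n h1 hA, h1, h2⟩

lemma cnt_dvd (q N : ℕ) : (cntF {n | q ∣ n} N).card = N / q := by
  classical
  rw [← Nat.Ioc_filter_dvd_card_eq_div N q]
  congr 1
  ext n
  simp only [cntF, Finset.mem_filter, Finset.mem_Icc, Finset.mem_Ioc, Set.mem_setOf_eq]
  exact ⟨fun ⟨⟨a,b⟩,c⟩ => ⟨⟨a,b⟩,c⟩, fun ⟨⟨a,b⟩,c⟩ => ⟨⟨a,b⟩,c⟩⟩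

lemma cnt_dvd_le (q N : ℕ) : ((cntF {n | q ∣ n} N).card : ℝ) ≤ N / q := by
  rw [cnt_dvd]
  exact Nat.cast_div_le

lemma hasDensity_periodic' (r : ℕ → Prop) [inst : DecidablePred r] (Q : ℕ) (hQ : 0 < Q) :
    HasDensity {n | r (n % Q)} (((@Finset.filter ℕ r inst (Finset.range Q)).card : ℝ) / Q) := by
  classical
  set c := ((Finset.range Q).filter r).card with hc
  have key : ∀ k : ℕ, ((Finset.range (Q*k)).filter (fun n => r (n % Q))).card = k * c := by
    intro k
    induction k with
    | zero => simp
    | succ k ih =>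
      have hsplit : Q * (k+1) = Q * k + Q := by ring
      rw [hsplit, Finset.range_add, Finset.filter_union, Finset.card_union_of_disjoint, ih]
      · have him : ((Finset.range Q).map (addLeftEmbedding (Q*k))).filter (fun n => r (n % Q))
            = ((Finset.range Q).filter r).map (addLeftEmbedding (Q*k)) := by
          ext n
          simp only [Finset.mem_filter, Finset.mem_map, Finset.mem_range,
            addLeftEmbedding_apply]
          constructor
          · rintro ⟨⟨a, ha, rfl⟩, hr⟩
            refine ⟨a, ⟨ha, ?_⟩, rfl⟩
            rwa [Nat.mul_add_mod, Nat.mod_eq_of_lt ha] at hr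
          · rintro ⟨a, ⟨ha, hr⟩, rfl⟩
            exact ⟨⟨a, ha, rfl⟩, by rw [Nat.mul_add_mod, Nat.mod_eq_of_lt ha]; exact hr⟩
        rw [him, Finset.card_map]
        ring
      · refine Finset.disjoint_left.mpr ?_
        intro n hn hn'
        have h1 : n < Q * k := Finset.mem_range.mp (Finset.mem_filter.mp hn).1
        obtain ⟨a, _, ha⟩ := Finset.mem_map.mp (Finset.mem_filter.mp hn').1
        simp only [addLeftEmbedding_apply] at ha
        omega
  have low : ∀ N : ℕ, (N / Q) * c ≤ ((cntF {n | r (n % Q)} N).card) + 1 := by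
    intro N
    have hsub : (Finset.range (Q * (N / Q))).filter (fun n => r (n % Q))
        ⊆ insert 0 (cntF {n | r (n % Q)} N) := by
      intro n hn
      obtain ⟨hr1, hr2⟩ := Finset.mem_filter.mp hn
      rw [Finset.mem_range] at hr1
      rcases Nat.eq_zero_or_pos n with rfl | hn1
      · exact Finset.mem_insert_self _ _
      · refine Finset.mem_insert_of_mem (mem_cntF.mpr ⟨hr2, hn1, ?_⟩)
        have : Q * (N / Q) ≤ N := Nat.mul_div_le N Q
        omega
    calc (N / Q) * c = ((Finset.range (Q * (N/Q))).filter (fun n => r (n % Q))).card :=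
          (key _).symm
    _ ≤ (insert 0 (cntF {n | r (n % Q)} N)).card := Finset.card_le_card hsub
    _ ≤ _ := Finset.card_insert_le _ _
  have high : ∀ N : ℕ, (cntF {n | r (n % Q)} N).card ≤ (N / Q + 1) * c := by
    intro N
    have hsub : cntF {n | r (n % Q)} N
        ⊆ (Finset.range (Q * (N / Q + 1))).filter (fun n => r (n % Q)) := by
      intro n hn
      obtain ⟨hA, h1, h2⟩ := mem_cntF.mp hn
      refine Finset.mem_filter.mpr ⟨Finset.mem_range.mpr ?_, hA⟩
      have : N < Q * (N / Q + 1) := Nat.lt_mul_div_succ N hQ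
      omega
    calc _ ≤ _ := Finset.card_le_card hsub
    _ = (N / Q + 1) * c := key _
  rw [HasDensity]
  rw [show (fun N : ℕ => (cnt {n | r (n % Q)} N : ℝ)/N)
      = fun N : ℕ => ((cntF {n | r (n % Q)} N).card : ℝ)/N from funext fun N => by rw [cnt_eq]]
  have hQR : (0:ℝ) < Q := by exact_mod_cast hQ
  rw [← tendsto_sub_nhds_zero_iff]
  apply squeeze_zero_norm' (a := fun N : ℕ => (2*(c:ℝ)+1)/N)
  · filter_upwards [eventually_ge_atTop 1] with N hN
    have hNR : (0:ℝ) < N := by exact_mod_cast hN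
    set k := N / Q with hk
    have hkQ : ((k * Q : ℕ) : ℝ) ≤ (N:ℝ) := by exact_mod_cast Nat.div_mul_le_self N Q
    have hNk : (N:ℝ) < Q * ((k:ℝ)+1) := by exact_mod_cast Nat.lt_mul_div_succ N hQ
    have hlR : (k:ℝ) * c ≤ ((cntF {n | r (n % Q)} N).card : ℝ) + 1 := by exact_mod_cast low N
    have hhR : ((cntF {n | r (n % Q)} N).card : ℝ) ≤ ((k:ℝ)+1) * c := by exact_mod_cast high N
    have hc0 : (0:ℝ) ≤ c := Nat.cast_nonneg c
    have hkQ' : (k:ℝ) * Q ≤ N := by push_cast at hkQ; linarith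
    have e1 : (k:ℝ) * c ≤ N * ((c:ℝ) / Q) := by
      rw [mul_comm (N:ℝ), div_mul_eq_mul_div, le_div_iff₀ hQR]
      nlinarith
    have e2 : (N:ℝ) * ((c:ℝ) / Q) ≤ ((k:ℝ)+1) * c := by
      rw [mul_comm (N:ℝ), div_mul_eq_mul_div, div_le_iff₀ hQR]
      nlinarith
    have heq : ((cntF {n | r (n % Q)} N).card : ℝ)/N - (c:ℝ)/Q
        = (((cntF {n | r (n % Q)} N).card : ℝ) - N*((c:ℝ)/Q))/N := by
      rw [sub_div, mul_div_cancel_left₀ _ hNR.ne']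
    rw [Real.norm_eq_abs, heq, abs_div, abs_of_pos hNR]
    gcongr
    rw [abs_le]
    constructor <;> linarith
  · exact tendsto_const_div_atTop_nhds_zero_nat (2*(c:ℝ)+1)

lemma sum_le_tail {g : ℕ → ℝ} (hg : Summable g) (hg0 : ∀ n, 0 ≤ g n) (t : ℕ) (F : Finset ℕ)
    (hF : ∀ p ∈ F, t < p) : ∑ p ∈ F, g p ≤ ∑' k, g (k + (t+1)) := by
  have hs : Summable (fun k => g (k + (t+1))) := (summable_nat_add_iff _).2 hg
  have h1 : ∑ p ∈ F, g p = ∑ p ∈ F, g (p - (t+1) + (t+1)) :=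
    Finset.sum_congr rfl (fun p hp => by rw [Nat.sub_add_cancel (hF p hp)])
  have h2 : ∑ k ∈ F.image (fun p => p - (t+1)), g (k + (t+1)) = ∑ p ∈ F, g (p - (t+1) + (t+1)) :=
    Finset.sum_image (fun x hx y hy h => by
      have := hF x hx; have := hF y hy; omega)
  rw [h1, ← h2]
  exact Summable.sum_le_tsum _ (fun i _ => hg0 _) hs

-- local valuation lemma
lemma local_mod {p : ℕ} (t : ℕ) {n : ℕ} (hp : p.Prime) (hn : n ≠ 0) :
    (n % p^(t+1) ≠ 0 ↔ n.factorization p ≤ t)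
    ∧ (n % p^(t+1) ≠ 0 → (n % p^(t+1)).factorization p = n.factorization p) := by
  have hq0 : 0 < p^(t+1) := pow_pos hp.pos _
  have hiff : n % p^(t+1) ≠ 0 ↔ n.factorization p ≤ t := by
    rw [Ne, ← Nat.dvd_iff_mod_eq_zero, hp.pow_dvd_iff_le_factorization hn]
    omega
  refine ⟨hiff, ?_⟩
  intro hs
  set q := p^(t+1) with hqdef
  have hv : n.factorization p ≤ t := hiff.mp hs
  have hmoddef : n % q = n - q * (n / q) := by
    have := Nat.mod_add_div n q
    omega
  have hd1 : p ^ (n.factorization p) ∣ n % q := by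
    rw [hmoddef]
    refine Nat.dvd_sub (Nat.ordProj_dvd n p) ?_
    exact dvd_mul_of_dvd_left (pow_dvd_pow p (by omega)) _
  have hd2 : ¬ p ^ (n.factorization p + 1) ∣ n % q := by
    intro hc
    have hdn : p ^ (n.factorization p + 1) ∣ n := by
      have h2 : p ^ (n.factorization p + 1) ∣ q * (n / q) :=
        dvd_mul_of_dvd_left (pow_dvd_pow p (by omega)) _
      have := Nat.dvd_add hc h2
      rwa [Nat.mod_add_div] at this
    rw [hp.pow_dvd_iff_le_factorization hn] at hdn
    omega
  have h1 := (hp.pow_dvd_iff_le_factorization hs).mp hd1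
  have h2 : ¬ (n.factorization p + 1 ≤ (n % q).factorization p) := fun h =>
    hd2 ((hp.pow_dvd_iff_le_factorization hs).mpr h)
  omega

def QQ (t : ℕ) : ℕ := ∏ p ∈ Nat.primesBelow (t+1), p^(t+1)

lemma QQ_pos (t : ℕ) : 0 < QQ t :=
  Finset.prod_pos (fun p hp => pow_pos (Nat.prime_of_mem_primesBelow hp).pos _)

def rA (w : ArithmeticFunction ℂ) (t : ℕ) (j : ℕ) : Prop :=
  ∀ p, p ≤ t → p.Prime → j % p^(t+1) ≠ 0 ∧ w (p ^ ((j % p^(t+1)).factorization p)) ≠ 0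

def AA (w : ArithmeticFunction ℂ) (t : ℕ) : Set ℕ := {n | rA w t (n % QQ t)}

lemma mem_AA_iff (w : ArithmeticFunction ℂ) (t : ℕ) {n : ℕ} (hn : n ≠ 0) :
    n ∈ AA w t ↔ ∀ p, p ≤ t → p.Prime →
      n.factorization p ≤ t ∧ w (p ^ (n.factorization p)) ≠ 0 := by
  have hmod : ∀ p, p ≤ t → p.Prime → (n % QQ t) % p^(t+1) = n % p^(t+1) := by
    intro p hpt hp
    exact Nat.mod_mod_of_dvd n
      (Finset.dvd_prod_of_mem _ (Nat.mem_primesBelow.mpr ⟨by omega, hp⟩))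
  constructor
  · intro h p hpt hp
    obtain ⟨h1, h2⟩ := h p hpt hp
    rw [hmod p hpt hp] at h1 h2
    obtain ⟨hiff, heq⟩ := local_mod t hp hn
    refine ⟨hiff.mp h1, ?_⟩
    rwa [heq h1] at h2
  · intro h p hpt hp
    obtain ⟨h1, h2⟩ := h p hpt hp
    obtain ⟨hiff, heq⟩ := local_mod t hp hn
    have hne := hiff.mpr h1
    have := hmod p hpt hp
    refine ⟨by rw [this]; exact hne, ?_⟩
    rw [this, heq hne]
    exact h2

lemma mem_G_iff {w : ArithmeticFunction ℂ} (hwm : w.IsMultiplicative) {n : ℕ} (hn : n ≠ 0) :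
    w n ≠ 0 ↔ ∀ p, p.Prime → w (p ^ (n.factorization p)) ≠ 0 := by
  rw [ArithmeticFunction.IsMultiplicative.multiplicative_factorization w hwm hn, Finsupp.prod,
    Finset.prod_ne_zero_iff]
  constructor
  · intro h p hp
    by_cases hmem : p ∈ n.factorization.support
    · exact h p hmem
    · have h0 : n.factorization p = 0 := Finsupp.notMem_support_iff.mp hmem
      rw [h0, pow_zero, hwm.map_one]
      exact one_ne_zero
  · intro h p hmem
    exact h p (Nat.prime_of_mem_primeFactors (by rwa [Nat.support_factorization] at hmem))

lemma w_prime {ν w : ArithmeticFunction ℂ} (hν : ν.IsMultiplicative) (hw : ν * w = 1)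
    (hw1 : w 1 = 1) {p : ℕ} (hp : p.Prime) : w p = -ν p := by
  have h := congrArg (fun f => f p) hw
  simp only [ArithmeticFunction.mul_apply] at h
  rw [Nat.sum_divisorsAntidiagonal (f := fun a b => ν a * w b), hp.divisors] at h
  rw [Finset.sum_insert (by simp [hp.one_lt.ne] : (1:ℕ) ∉ ({p} : Finset ℕ))] at h
  simp only [Finset.sum_singleton, Nat.div_one, Nat.div_self hp.pos, hν.map_one, one_mul,
    hw1, mul_one] at h
  have hp1 : ((1 : ArithmeticFunction ℂ)) p = 0 := by
    rw [ArithmeticFunction.one_apply]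
    simp [hp.one_lt.ne']
  rw [hp1] at h
  linear_combination h


lemma cnt_split2 {A B : Set ℕ} {F1 F2 : Finset ℕ} {D1 D2 : ℕ → Set ℕ} (N : ℕ)
    (h : ∀ n, 1 ≤ n → n ≤ N → n ∈ A →
      n ∈ B ∨ (∃ q ∈ F1, n ∈ D1 q) ∨ (∃ q ∈ F2, n ∈ D2 q)) :
    (cntF A N).card ≤ (cntF B N).card + (∑ q ∈ F1, (cntF (D1 q) N).card
      + ∑ q ∈ F2, (cntF (D2 q) N).card) := by
  classical
  have hsub : cntF A N ⊆ cntF B N ∪ (F1.biUnion (fun q => cntF (D1 q) N)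
      ∪ F2.biUnion (fun q => cntF (D2 q) N)) := by
    intro n hn
    obtain ⟨hA, h1, h2⟩ := mem_cntF.mp hn
    rcases h n h1 h2 hA with hB | ⟨q, hq, hD⟩ | ⟨q, hq, hD⟩
    · exact Finset.mem_union_left _ (mem_cntF.mpr ⟨hB, h1, h2⟩)
    · exact Finset.mem_union_right _ (Finset.mem_union_left _
        (Finset.mem_biUnion.mpr ⟨q, hq, mem_cntF.mpr ⟨hD, h1, h2⟩⟩))
    · exact Finset.mem_union_right _ (Finset.mem_union_right _
        (Finset.mem_biUnion.mpr ⟨q, hq, mem_cntF.mpr ⟨hD, h1, h2⟩⟩))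
  calc (cntF A N).card
      ≤ (cntF B N ∪ (F1.biUnion (fun q => cntF (D1 q) N)
          ∪ F2.biUnion (fun q => cntF (D2 q) N))).card := Finset.card_le_card hsub
  _ ≤ (cntF B N).card + ((F1.biUnion (fun q => cntF (D1 q) N)
          ∪ F2.biUnion (fun q => cntF (D2 q) N))).card := Finset.card_union_le _ _
  _ ≤ (cntF B N).card + ((F1.biUnion (fun q => cntF (D1 q) N)).card
          + (F2.biUnion (fun q => cntF (D2 q) N)).card) :=
        Nat.add_le_add_left (Finset.card_union_le _ _) _
  _ ≤ _ := by
      refine Nat.add_le_add_left (Nat.add_le_add ?_ ?_) _ <;> exact Finset.card_biUnion_le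

def MM (t₀ : ℕ) : ℕ := ∏ p ∈ Nat.primesBelow (t₀+1), p

lemma MM_pos (t₀ : ℕ) : 0 < MM t₀ :=
  Finset.prod_pos (fun p hp => (Nat.prime_of_mem_primesBelow hp).pos)

lemma MM_two (t₀ : ℕ) (h : 2 ≤ t₀) : 2 ≤ MM t₀ := by
  have h2 : (2:ℕ) ∈ Nat.primesBelow (t₀+1) := Nat.mem_primesBelow.mpr ⟨by omega, Nat.prime_two⟩
  calc 2 ≤ 2 := le_refl 2
  _ ≤ MM t₀ := Finset.single_le_prod' (fun p hp => (Nat.prime_of_mem_primesBelow hp).one_lt.le) h2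

def PP (t₀ : ℕ) : Set ℕ := {n | n % MM t₀ = 1}

lemma PD_card_le_one (M q : ℕ) {inst : DecidablePred fun j => j % M = 1 ∧ q ∣ j} :
    (@Finset.filter ℕ (fun j => j % M = 1 ∧ q ∣ j) inst
      (Finset.range (M*q))).card ≤ 1 := by
  apply Finset.card_le_one.mpr
  intro a ha b hb
  rw [Finset.mem_filter, Finset.mem_range] at ha hb
  by_cases hco : Nat.Coprime M q
  · have hab : a ≡ b [MOD M * q] := by
      apply (Nat.modEq_and_modEq_iff_modEq_mul hco).mp
      refine ⟨?_, ?_⟩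
      · show a % M = b % M
        rw [ha.2.1, hb.2.1]
      · exact (Nat.modEq_zero_iff_dvd.mpr ha.2.2).trans
          (Nat.modEq_zero_iff_dvd.mpr hb.2.2).symm
    have h := hab
    unfold Nat.ModEq at h
    rwa [Nat.mod_eq_of_lt ha.1, Nat.mod_eq_of_lt hb.1] at h
  · exfalso
    obtain ⟨p, hp, hpd⟩ := Nat.exists_prime_and_dvd (fun h => hco h)
    have hpM : p ∣ M := hpd.trans (Nat.gcd_dvd_left M q)
    have hpq : p ∣ q := hpd.trans (Nat.gcd_dvd_right M q)
    have hpa : p ∣ a := hpq.trans ha.2.2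
    have : p ∣ a % M := (Nat.dvd_mod_iff hpM).mpr hpa
    rw [ha.2.1] at this
    exact hp.one_lt.ne' (Nat.dvd_one.mp this)


theorem dirichlet_inverse_support
    (ν : ArithmeticFunction ℂ) (hν : ν.IsMultiplicative)
    (hsum : Summable (fun p : {p : ℕ // p.Prime ∧ ν p = 0} => (1 : ℝ) / (p : ℕ)))
    (w : ArithmeticFunction ℂ) (hw : ν * w = 1) :
    w.IsMultiplicative ∧ ∃ d : ℝ, 0 < d ∧ HasDensity {n : ℕ | w n ≠ 0} d := by
  classical
  -- Part 1 : multiplicativity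
  have hw1 : w 1 = 1 := by
    have h1 := congrArg (fun f => f 1) hw
    simpa [ArithmeticFunction.mul_apply, hν.map_one] using h1
  have hwm : w.IsMultiplicative := by
    have hme := mext_isMultiplicative w hw1
    have key : ν * mext w = 1 := by
      rw [ArithmeticFunction.IsMultiplicative.eq_iff_eq_on_prime_powers _ (hν.mul hme) _
        isMultiplicative_one]
      intro p i hp
      have heq : (ν * mext w) (p ^ i) = (ν * w) (p ^ i) := by
        rw [ArithmeticFunction.mul_apply, ArithmeticFunction.mul_apply]
        apply Finset.sum_congr rfl
        intro x hx
        rw [Nat.mem_divisorsAntidiagonal] at hx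
        obtain ⟨j, hj, hxe⟩ := (Nat.dvd_prime_pow hp).mp (Dvd.intro_left x.1 hx.1)
        rw [hxe, mext_prime_pow w hw1 hp]
      rw [heq, hw]
    have hwe : w = mext w := by
      calc w = 1 * w := (one_mul w).symm
      _ = (ν * mext w) * w := by rw [key]
      _ = (ν * w) * mext w := by ring
      _ = mext w := by rw [hw, one_mul]
    rw [hwe]; exact hme
  set G : Set ℕ := {n : ℕ | w n ≠ 0} with hGdef
  refine ⟨hwm, ?_⟩
  have hwp : ∀ p : ℕ, p.Prime → w p = -ν p := fun p hp => w_prime hν hw hw1 hp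
  -- summable tails
  set g : ℕ → ℝ := Set.indicator {p : ℕ | p.Prime ∧ ν p = 0} (fun p => 1/(p:ℝ)) with hgdef
  have hgsum : Summable g := by
    rw [hgdef, ← summable_subtype_iff_indicator]
    exact hsum
  have hg0 : ∀ n, 0 ≤ g n := fun n => Set.indicator_nonneg (fun p _ => by positivity) n
  have hgeq : ∀ p : ℕ, p.Prime → ν p = 0 → g p = 1/(p:ℝ) := by
    intro p h1 h2
    rw [hgdef]
    exact Set.indicator_of_mem (show p ∈ {p : ℕ | p.Prime ∧ ν p = 0} from ⟨h1, h2⟩) _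
  set g2 : ℕ → ℝ := fun m => 1/(m:ℝ)^2 with hg2def
  have hg2sum : Summable g2 := by
    rw [hg2def]
    exact Real.summable_one_div_nat_pow.mpr one_lt_two
  have hg20 : ∀ n, 0 ≤ g2 n := fun n => by rw [hg2def]; positivity
  set T1 : ℕ → ℝ := fun t => ∑' k, g (k + (t+1)) with hT1def
  set T2 : ℕ → ℝ := fun t => ∑' k, g2 (k + (t+1)) with hT2def
  set τ : ℕ → ℝ := fun t => T1 t + T2 t with hτdef
  have hT10 : ∀ t, 0 ≤ T1 t := fun t => tsum_nonneg (fun k => hg0 _)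
  have hT20 : ∀ t, 0 ≤ T2 t := fun t => tsum_nonneg (fun k => hg20 _)
  have hτ0 : ∀ t, 0 ≤ τ t := fun t => add_nonneg (hT10 t) (hT20 t)
  have hτtend : Tendsto τ atTop (𝓝 0) := by
    have h1 : Tendsto T1 atTop (𝓝 0) := (tendsto_sum_nat_add g).comp (tendsto_add_atTop_nat 1)
    have h2 : Tendsto T2 atTop (𝓝 0) := (tendsto_sum_nat_add g2).comp (tendsto_add_atTop_nat 1)
    simpa using h1.add h2
  set δ : ℕ → ℝ := fun t => ((t:ℝ)+1) * (1/2)^(t+1) with hδdef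
  have hδ0 : ∀ t, 0 ≤ δ t := fun t => by rw [hδdef]; positivity
  have hδtend : Tendsto δ atTop (𝓝 0) := by
    have hs : Summable (fun n : ℕ => (n:ℝ)^1 * (1/2)^n) :=
      summable_pow_mul_geometric_of_norm_lt_one 1 (by rw [Real.norm_eq_abs]; rw [abs_of_pos] <;> norm_num)
    have h2 := hs.tendsto_atTop_zero.comp (tendsto_add_atTop_nat 1)
    refine h2.congr (fun t => ?_)
    show ((((t+1):ℕ)):ℝ)^1 * (1/2)^(t+1) = δ t
    rw [hδdef]
    push_cast
    ring
  -- densities of the approximating sets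
  have hAdens : ∀ t : ℕ, ∃ d : ℝ, HasDensity (AA w t) d := fun t =>
    ⟨_, hasDensity_periodic' (rA w t) (QQ t) (QQ_pos t)⟩
  choose dA hdA using hAdens
  -- inequality I : G is contained in AA t up to (t+1)-th powers of small primes
  have hI : ∀ t N : ℕ, ((cntF G N).card : ℝ) ≤ ((cntF (AA w t) N).card : ℝ) + N * δ t := by
    intro t N
    have hsplit := cnt_split2 (A := G) (B := AA w t)
      (F1 := Nat.primesBelow (t+1)) (F2 := (∅ : Finset ℕ))
      (D1 := fun p => {m | p^(t+1) ∣ m}) (D2 := fun _ => (∅ : Set ℕ)) N ?hyp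
    case hyp =>
      intro n h1 h2 hn
      by_cases hA : n ∈ AA w t
      · exact Or.inl hA
      · refine Or.inr (Or.inl ?_)
        rw [mem_AA_iff w t (by omega)] at hA
        push_neg at hA
        obtain ⟨p, hpt, hp, hbad⟩ := hA
        have hwp' : w (p ^ n.factorization p) ≠ 0 := (mem_G_iff hwm (by omega)).mp hn p hp
        have hv : t < n.factorization p := by
          by_contra hle
          push_neg at hle
          exact hwp' (hbad hle)
        refine ⟨p, Nat.mem_primesBelow.mpr ⟨by omega, hp⟩, ?_⟩
        show p^(t+1) ∣ n
        rw [hp.pow_dvd_iff_le_factorization (by omega)]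
        omega
    have hsum1 : (∑ p ∈ Nat.primesBelow (t+1), ((cntF {m | p^(t+1) ∣ m} N).card : ℝ))
        ≤ N * δ t := by
      have hstep : ∀ p ∈ Nat.primesBelow (t+1),
          ((cntF {m | p^(t+1) ∣ m} N).card : ℝ) ≤ (N:ℝ) * (1/2)^(t+1) := by
        intro p hp
        have hp' := Nat.prime_of_mem_primesBelow hp
        have h1 : ((cntF {m | p^(t+1) ∣ m} N).card : ℝ) ≤ (N:ℝ)/((p:ℝ)^(t+1)) := by
          have h := cnt_dvd_le (p^(t+1)) N
          push_cast at h
          exact h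
        have h2 : (N:ℝ)/((p:ℝ)^(t+1)) ≤ (N:ℝ)/((2:ℝ)^(t+1)) := by
          gcongr
          all_goals try norm_num
          all_goals exact_mod_cast hp'.two_le
        have h3 : (N:ℝ)/((2:ℝ)^(t+1)) = (N:ℝ) * (1/2)^(t+1) := by
          rw [div_pow, one_pow]
          ring
        linarith
      calc (∑ p ∈ Nat.primesBelow (t+1), ((cntF {m | p^(t+1) ∣ m} N).card : ℝ))
          ≤ ∑ _p ∈ Nat.primesBelow (t+1), (N:ℝ) * (1/2)^(t+1) := Finset.sum_le_sum hstep
      _ = ((Nat.primesBelow (t+1)).card : ℝ) * ((N:ℝ) * (1/2)^(t+1)) := by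
          rw [Finset.sum_const, nsmul_eq_mul]
      _ ≤ ((t:ℝ)+1) * ((N:ℝ) * (1/2)^(t+1)) := by
          have hcard : (Nat.primesBelow (t+1)).card ≤ t+1 := by
            have hsub : Nat.primesBelow (t+1) ⊆ Finset.range (t+1) :=
              fun p hp => Finset.mem_range.mpr (Nat.lt_of_mem_primesBelow hp)
            calc (Nat.primesBelow (t+1)).card ≤ (Finset.range (t+1)).card :=
                  Finset.card_le_card hsub
            _ = t+1 := Finset.card_range _
          have : ((Nat.primesBelow (t+1)).card : ℝ) ≤ (t:ℝ)+1 := by exact_mod_cast hcard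
          have hnn : (0:ℝ) ≤ (N:ℝ) * (1/2)^(t+1) := by positivity
          nlinarith
      _ = N * δ t := by rw [hδdef]; ring
    have hcast : ((cntF G N).card : ℝ) ≤ ((cntF (AA w t) N).card : ℝ)
        + ((∑ p ∈ Nat.primesBelow (t+1), ((cntF {m | p^(t+1) ∣ m} N).card : ℝ)) + 0) := by
      have := hsplit
      push_cast
      exact_mod_cast this
    simp only [add_zero] at hcast
    linarith
  -- inequality II : AA t is contained in G up to bad primes / squares beyond t
  have hII : ∀ t N : ℕ, ((cntF (AA w t) N).card : ℝ) ≤ ((cntF G N).card : ℝ) + N * τ t := by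
    intro t N
    have hsplit := cnt_split2 (A := AA w t) (B := G)
      (F1 := (Finset.Ioc t N).filter (fun p => p.Prime ∧ ν p = 0))
      (F2 := Finset.Ioc t N)
      (D1 := fun q => {m | q ∣ m}) (D2 := fun q => {m | q^2 ∣ m}) N ?hyp
    case hyp =>
      intro n h1 h2 hA
      by_cases hG' : n ∈ G
      · exact Or.inl hG'
      · have hn0 : n ≠ 0 := by omega
        rw [hGdef, Set.mem_setOf_eq, mem_G_iff hwm hn0] at hG'
        push_neg at hG'
        obtain ⟨p, hp, hz⟩ := hG'
        have hv1 : 1 ≤ n.factorization p := by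
          by_contra h0
          push_neg at h0
          have hz0 : n.factorization p = 0 := by omega
          rw [hz0, pow_zero, hw1] at hz
          exact one_ne_zero hz
        have hpn : p ∣ n := by
          have h := (pow_dvd_pow p hv1).trans (Nat.ordProj_dvd n p)
          rwa [pow_one] at h
        have hpN : p ≤ N := (Nat.le_of_dvd (by omega) hpn).trans h2
        have hpt : t < p := by
          by_contra hle
          push_neg at hle
          exact ((mem_AA_iff w t hn0).mp hA p hle hp).2 hz
        by_cases hv2 : 2 ≤ n.factorization p
        · refine Or.inr (Or.inr ⟨p, Finset.mem_Ioc.mpr ⟨hpt, hpN⟩, ?_⟩)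
          show p^2 ∣ n
          rw [hp.pow_dvd_iff_le_factorization hn0]
          omega
        · have hv : n.factorization p = 1 := by omega
          have hνp : ν p = 0 := by
            have hwprime := hwp p hp
            rw [hv, pow_one] at hz
            rw [hz] at hwprime
            exact neg_eq_zero.mp hwprime.symm
          exact Or.inr (Or.inl ⟨p,
            Finset.mem_filter.mpr ⟨Finset.mem_Ioc.mpr ⟨hpt, hpN⟩, hp, hνp⟩, hpn⟩)
    set F1 := (Finset.Ioc t N).filter (fun p => p.Prime ∧ ν p = 0) with hF1def
    have hS1 : (∑ q ∈ F1, ((cntF {m | q ∣ m} N).card : ℝ)) ≤ (N:ℝ) * T1 t := by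
      have hstep : ∀ q ∈ F1, ((cntF {m | q ∣ m} N).card : ℝ) ≤ (N:ℝ) * g q := by
        intro q hq
        obtain ⟨hqI, hqP, hqν⟩ : q ∈ Finset.Ioc t N ∧ q.Prime ∧ ν q = 0 := by
          have h := Finset.mem_filter.mp hq
          exact ⟨h.1, h.2.1, h.2.2⟩
        rw [hgeq q hqP hqν]
        calc ((cntF {m | q ∣ m} N).card : ℝ) ≤ (N:ℝ)/(q:ℝ) := cnt_dvd_le q N
        _ = (N:ℝ) * (1/(q:ℝ)) := by ring
      calc (∑ q ∈ F1, ((cntF {m | q ∣ m} N).card : ℝ)) ≤ ∑ q ∈ F1, (N:ℝ) * g q :=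
            Finset.sum_le_sum hstep
      _ = (N:ℝ) * ∑ q ∈ F1, g q := by rw [Finset.mul_sum]
      _ ≤ (N:ℝ) * T1 t := by
          apply mul_le_mul_of_nonneg_left _ (Nat.cast_nonneg N)
          exact sum_le_tail hgsum hg0 t F1
            (fun q hq => (Finset.mem_Ioc.mp (Finset.mem_filter.mp hq).1).1)
    have hS2 : (∑ q ∈ Finset.Ioc t N, ((cntF {m | q^2 ∣ m} N).card : ℝ)) ≤ (N:ℝ) * T2 t := by
      have hstep : ∀ q ∈ Finset.Ioc t N, ((cntF {m | q^2 ∣ m} N).card : ℝ) ≤ (N:ℝ) * g2 q := by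
        intro q hq
        have h1 : ((cntF {m | q^2 ∣ m} N).card : ℝ) ≤ (N:ℝ)/((q:ℝ)^2) := by
          have h := cnt_dvd_le (q^2) N
          push_cast at h
          exact h
        have h2 : (N:ℝ)/((q:ℝ)^2) = (N:ℝ) * g2 q := by rw [hg2def]; ring
        linarith
      calc (∑ q ∈ Finset.Ioc t N, ((cntF {m | q^2 ∣ m} N).card : ℝ))
          ≤ ∑ q ∈ Finset.Ioc t N, (N:ℝ) * g2 q := Finset.sum_le_sum hstep
      _ = (N:ℝ) * ∑ q ∈ Finset.Ioc t N, g2 q := by rw [Finset.mul_sum]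
      _ ≤ (N:ℝ) * T2 t := by
          apply mul_le_mul_of_nonneg_left _ (Nat.cast_nonneg N)
          exact sum_le_tail hg2sum hg20 t _ (fun q hq => (Finset.mem_Ioc.mp hq).1)
    have hcast : ((cntF (AA w t) N).card : ℝ) ≤ ((cntF G N).card : ℝ)
        + ((∑ q ∈ F1, ((cntF {m | q ∣ m} N).card : ℝ))
          + (∑ q ∈ Finset.Ioc t N, ((cntF {m | q^2 ∣ m} N).card : ℝ))) := by
      exact_mod_cast hsplit
    have : (N:ℝ) * τ t = (N:ℝ) * T1 t + (N:ℝ) * T2 t := by rw [hτdef]; ring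
    linarith
  -- choose t₀
  obtain ⟨t₀, ht₀2, hτt₀⟩ : ∃ t₀ : ℕ, 2 ≤ t₀ ∧ τ t₀ ≤ 1/2 := by
    have h1 : ∀ᶠ t in atTop, τ t < 1/2 :=
      hτtend.eventually (gt_mem_nhds (by norm_num : (0:ℝ) < 1/2))
    obtain ⟨t₀, h⟩ := (h1.and (eventually_ge_atTop 2)).exists
    exact ⟨t₀, h.2, le_of_lt h.1⟩
  set M := MM t₀ with hMdef
  have hM2 : 2 ≤ M := MM_two t₀ ht₀2
  have hM0R : (0:ℝ) < M := by
    have : (0:ℕ) < M := by omega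
    exact_mod_cast this
  -- density of the progression set
  have hPdens : HasDensity (PP t₀) (1/(M:ℝ)) := by
    have h := hasDensity_periodic' (fun j => j = 1) M (by omega)
    have hcard : (Finset.range M).filter (fun j => j = 1) = {1} := by
      ext j
      simp only [Finset.mem_filter, Finset.mem_range, Finset.mem_singleton]
      constructor
      · rintro ⟨_, hj⟩; exact hj
      · rintro rfl; exact ⟨by omega, rfl⟩
    rw [hcard, Finset.card_singleton] at h
    have hone : ((1:ℕ):ℝ) = 1 := Nat.cast_one
    rw [hone] at h
    exact h
  -- densities of PP ∩ divisibility sets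
  have hPDdens : ∀ q : ℕ, ∃ c : ℕ, c ≤ 1 ∧ HasDensity (PP t₀ ∩ {m | q ∣ m}) ((c:ℝ)/((M:ℝ)*q)) := by
    intro q
    rcases Nat.eq_zero_or_pos q with rfl | hq
    · refine ⟨0, by omega, ?_⟩
      have hempty : ∀ N : ℕ, (cntF (PP t₀ ∩ {m | (0:ℕ) ∣ m}) N) = ∅ := by
        intro N
        ext n
        simp only [mem_cntF, Finset.notMem_empty, iff_false, not_and]
        rintro ⟨hP, hD⟩
        have hn0 : n = 0 := Nat.eq_zero_of_zero_dvd hD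
        omega
      have hfun : (fun N : ℕ => (cnt (PP t₀ ∩ {m | (0:ℕ) ∣ m}) N : ℝ)/N) = fun _ => (0:ℝ) := by
        funext N
        rw [cnt_eq, hempty N, Finset.card_empty]
        simp
      have hval : ((0:ℕ):ℝ)/((M:ℝ)*(0:ℕ)) = 0 := by norm_num
      unfold HasDensity
      rw [hfun, hval]
      exact tendsto_const_nhds
    · have hMq : 0 < M * q := by positivity
      have hseteq : PP t₀ ∩ {m | q ∣ m} = {n | (fun j => j % M = 1 ∧ q ∣ j) (n % (M*q))} := by
        ext n
        simp only [PP, Set.mem_inter_iff, Set.mem_setOf_eq]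
        rw [Nat.mod_mod_of_dvd n (dvd_mul_right M q), Nat.dvd_mod_iff (dvd_mul_left q M)]
      refine ⟨((Finset.range (M*q)).filter (fun j => j % M = 1 ∧ q ∣ j)).card,
        PD_card_le_one M q, ?_⟩
      rw [hseteq]
      have h := hasDensity_periodic' (fun j => j % M = 1 ∧ q ∣ j) (M*q) hMq
      have hval : (((M*q : ℕ)):ℝ) = (M:ℝ)*q := by push_cast; ring
      rw [hval] at h
      exact h
  choose cPD hcPDle hcPDd using hPDdens
  -- inequality III : lower bound for dA t when t₀ ≤ t
  have hIII : ∀ t : ℕ, t₀ ≤ t → 1/(M:ℝ) * (1 - τ t₀) ≤ dA t := by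
    intro t ht
    set F1 := (Finset.Ioc t₀ t).filter (fun p => p.Prime ∧ ν p = 0) with hF1def
    set F2 := Finset.Ioc t₀ t with hF2def
    have hcount : ∀ N : ℕ, ((cntF (PP t₀) N).card : ℝ)
        ≤ ((cntF (AA w t) N).card : ℝ)
          + ((∑ q ∈ F1, ((cntF (PP t₀ ∩ {m | q ∣ m}) N).card : ℝ))
           + (∑ q ∈ F2, ((cntF (PP t₀ ∩ {m | q^2 ∣ m}) N).card : ℝ))) := by
      intro N
      have hsplit := cnt_split2 (A := PP t₀) (B := AA w t) (F1 := F1) (F2 := F2)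
        (D1 := fun q => PP t₀ ∩ {m | q ∣ m}) (D2 := fun q => PP t₀ ∩ {m | q^2 ∣ m}) N ?hyp
      case hyp =>
        intro n h1 h2 hP
        by_cases hexc : (∃ q ∈ F1, q ∣ n) ∨ (∃ q ∈ F2, q^2 ∣ n)
        · rcases hexc with ⟨q, hq, hd⟩ | ⟨q, hq, hd⟩
          · exact Or.inr (Or.inl ⟨q, hq, hP, hd⟩)
          · exact Or.inr (Or.inr ⟨q, hq, hP, hd⟩)
        · push_neg at hexc
          obtain ⟨hex1, hex2⟩ := hexc
          left
          rw [mem_AA_iff w t (by omega)]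
          intro p hpt hp
          by_cases hple : p ≤ t₀
          · have hpM : p ∣ M :=
              Finset.dvd_prod_of_mem _ (Nat.mem_primesBelow.mpr ⟨by omega, hp⟩)
            have hpn : ¬ p ∣ n := by
              intro hd
              have hmm : p ∣ n % M := (Nat.dvd_mod_iff hpM).mpr hd
              have hP' : n % M = 1 := hP
              rw [hP'] at hmm
              exact hp.one_lt.ne' (Nat.dvd_one.mp hmm)
            rw [Nat.factorization_eq_zero_of_not_dvd hpn]
            exact ⟨by omega, by rw [pow_zero, hw1]; exact one_ne_zero⟩
          · push_neg at hple
            have hsq : ¬ p^2 ∣ n := hex2 p (Finset.mem_Ioc.mpr ⟨hple, hpt⟩)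
            have hvle : n.factorization p ≤ 1 := by
              by_contra hv
              push_neg at hv
              exact hsq (by rw [hp.pow_dvd_iff_le_factorization (by omega)]; omega)
            refine ⟨by omega, ?_⟩
            rcases Nat.le_one_iff_eq_zero_or_eq_one.mp hvle with h0 | h1'
            · rw [h0, pow_zero, hw1]; exact one_ne_zero
            · rw [h1', pow_one, hwp p hp]
              intro hz
              have hνz : ν p = 0 := neg_eq_zero.mp hz
              have hpn : p ∣ n := by
                have h := Nat.ordProj_dvd n p
                rwa [h1', pow_one] at h
              exact hex1 p
                (Finset.mem_filter.mpr ⟨Finset.mem_Ioc.mpr ⟨hple, hpt⟩, hp, hνz⟩) hpn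
      exact_mod_cast hsplit
    have hptw : ∀ N : ℕ, (cnt (PP t₀) N : ℝ)/N
        ≤ (cnt (AA w t) N : ℝ)/N
          + ((∑ q ∈ F1, (cnt (PP t₀ ∩ {m | q ∣ m}) N : ℝ)/N)
           + (∑ q ∈ F2, (cnt (PP t₀ ∩ {m | q^2 ∣ m}) N : ℝ)/N)) := by
      intro N
      rcases Nat.eq_zero_or_pos N with rfl | hN
      · simp
      · have hNR : (0:ℝ) < N := by exact_mod_cast hN
        have h := hcount N
        simp only [← cnt_eq] at h
        calc (cnt (PP t₀) N : ℝ)/N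
            ≤ ((cnt (AA w t) N : ℝ)
              + ((∑ q ∈ F1, (cnt (PP t₀ ∩ {m | q ∣ m}) N : ℝ))
               + (∑ q ∈ F2, (cnt (PP t₀ ∩ {m | q^2 ∣ m}) N : ℝ))))/N := by gcongr
        _ = _ := by rw [add_div, add_div, Finset.sum_div, Finset.sum_div]
    have hcPDd' : ∀ q : ℕ, HasDensity (PP t₀ ∩ {m | q^2 ∣ m})
        ((cPD (q^2) : ℝ)/((M:ℝ)*(q:ℝ)^2)) := by
      intro q
      have h := hcPDd (q^2)
      have hcast : ((q^2:ℕ):ℝ) = (q:ℝ)^2 := by push_cast; ring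
      rwa [hcast] at h
    have htendR : Tendsto (fun N : ℕ => (cnt (AA w t) N : ℝ)/N
          + ((∑ q ∈ F1, (cnt (PP t₀ ∩ {m | q ∣ m}) N : ℝ)/N)
           + (∑ q ∈ F2, (cnt (PP t₀ ∩ {m | q^2 ∣ m}) N : ℝ)/N))) atTop
        (𝓝 (dA t + ((∑ q ∈ F1, (cPD q : ℝ)/((M:ℝ)*q))
           + (∑ q ∈ F2, (cPD (q^2) : ℝ)/((M:ℝ)*(q:ℝ)^2))))) := by
      apply Tendsto.add (hdA t)
      apply Tendsto.add
      · exact tendsto_finset_sum _ (fun q _ => hcPDd q)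
      · exact tendsto_finset_sum _ (fun q _ => hcPDd' q)
    have hL : 1/(M:ℝ) ≤ dA t + ((∑ q ∈ F1, (cPD q : ℝ)/((M:ℝ)*q))
           + (∑ q ∈ F2, (cPD (q^2) : ℝ)/((M:ℝ)*(q:ℝ)^2))) :=
      le_of_tendsto_of_tendsto' hPdens htendR hptw
    have hB1 : (∑ q ∈ F1, (cPD q : ℝ)/((M:ℝ)*q)) ≤ (1/(M:ℝ)) * T1 t₀ := by
      have hstep : ∀ q ∈ F1, (cPD q : ℝ)/((M:ℝ)*q) ≤ (1/(M:ℝ)) * g q := by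
        intro q hq
        obtain ⟨hqI, hqP, hqν⟩ : q ∈ Finset.Ioc t₀ t ∧ q.Prime ∧ ν q = 0 := by
          have h := Finset.mem_filter.mp hq
          exact ⟨h.1, h.2.1, h.2.2⟩
        have hq0 : (0:ℝ) < q := by
          have := hqP.pos
          exact_mod_cast this
        have hc1 : (cPD q : ℝ) ≤ 1 := by exact_mod_cast hcPDle q
        rw [hgeq q hqP hqν]
        rw [div_le_iff₀ (by positivity)]
        have : (1/(M:ℝ)) * (1/(q:ℝ)) * ((M:ℝ)*q) = 1 := by field_simp
        rw [this]
        exact hc1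
      calc (∑ q ∈ F1, (cPD q : ℝ)/((M:ℝ)*q)) ≤ ∑ q ∈ F1, (1/(M:ℝ)) * g q :=
            Finset.sum_le_sum hstep
      _ = (1/(M:ℝ)) * ∑ q ∈ F1, g q := by rw [Finset.mul_sum]
      _ ≤ (1/(M:ℝ)) * T1 t₀ := by
          apply mul_le_mul_of_nonneg_left _ (by positivity)
          exact sum_le_tail hgsum hg0 t₀ F1
            (fun q hq => (Finset.mem_Ioc.mp (Finset.mem_filter.mp hq).1).1)
    have hB2 : (∑ q ∈ F2, (cPD (q^2) : ℝ)/((M:ℝ)*(q:ℝ)^2)) ≤ (1/(M:ℝ)) * T2 t₀ := by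
      have hstep : ∀ q ∈ F2, (cPD (q^2) : ℝ)/((M:ℝ)*(q:ℝ)^2) ≤ (1/(M:ℝ)) * g2 q := by
        intro q hq
        have hqpos : 0 < q := by
          have := (Finset.mem_Ioc.mp hq).1
          omega
        have hq0 : (0:ℝ) < q := by exact_mod_cast hqpos
        have hc1 : (cPD (q^2) : ℝ) ≤ 1 := by exact_mod_cast hcPDle (q^2)
        have hg2q : g2 q = 1/(q:ℝ)^2 := by rw [hg2def]
        rw [hg2q]
        rw [div_le_iff₀ (by positivity)]
        have : (1/(M:ℝ)) * (1/(q:ℝ)^2) * ((M:ℝ)*(q:ℝ)^2) = 1 := by field_simp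
        rw [this]
        exact hc1
      calc (∑ q ∈ F2, (cPD (q^2) : ℝ)/((M:ℝ)*(q:ℝ)^2)) ≤ ∑ q ∈ F2, (1/(M:ℝ)) * g2 q :=
            Finset.sum_le_sum hstep
      _ = (1/(M:ℝ)) * ∑ q ∈ F2, g2 q := by rw [Finset.mul_sum]
      _ ≤ (1/(M:ℝ)) * T2 t₀ := by
          apply mul_le_mul_of_nonneg_left _ (by positivity)
          exact sum_le_tail hg2sum hg20 t₀ F2 (fun q hq => (Finset.mem_Ioc.mp hq).1)
    have hτeq : τ t₀ = T1 t₀ + T2 t₀ := rfl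
    have hexp : 1/(M:ℝ) * (1 - τ t₀) = 1/(M:ℝ) - (1/(M:ℝ) * T1 t₀ + 1/(M:ℝ) * T2 t₀) := by
      rw [hτeq]; ring
    linarith
  -- limsup / liminf machinery
  set f : ℕ → ℝ := fun N => (cnt G N : ℝ)/N with hfdef
  have hf0 : ∀ N, 0 ≤ f N := fun N => by rw [hfdef]; positivity
  have hf1 : ∀ N, f N ≤ 1 := by
    intro N
    rcases Nat.eq_zero_or_pos N with rfl | hN
    · rw [hfdef]; simp
    · have hNR : (0:ℝ) < N := by exact_mod_cast hN
      rw [hfdef]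
      apply div_le_one_of_le₀ _ (le_of_lt hNR)
      rw [cnt_eq]
      exact_mod_cast cntF_card_le G N
  have hbdd_le : IsBoundedUnder (· ≤ ·) atTop f := Filter.isBoundedUnder_of ⟨1, hf1⟩
  have hbdd_ge : IsBoundedUnder (· ≥ ·) atTop f := Filter.isBoundedUnder_of ⟨0, hf0⟩
  have hcob_ge : IsCoboundedUnder (· ≥ ·) atTop f := hbdd_le.isCoboundedUnder_ge
  have hcob_le : IsCoboundedUnder (· ≤ ·) atTop f := hbdd_ge.isCoboundedUnder_le
  set L := limsup f atTop with hLdef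
  set l := liminf f atTop with hldef
  have hIle : ∀ t N, f N ≤ (cnt (AA w t) N : ℝ)/N + δ t := by
    intro t N
    rcases Nat.eq_zero_or_pos N with rfl | hN
    · have h1 : f 0 = 0 := by rw [hfdef]; simp
      rw [h1]
      have h2 : (cnt (AA w t) 0 : ℝ)/((0:ℕ):ℝ) = 0 := by simp
      rw [h2, zero_add]
      exact hδ0 t
    · have hNR : (0:ℝ) < N := by exact_mod_cast hN
      have h := hI t N
      rw [hfdef]
      show (cnt G N : ℝ)/N ≤ _
      rw [cnt_eq, cnt_eq]
      calc ((cntF G N).card : ℝ)/N ≤ (((cntF (AA w t) N).card : ℝ) + N * δ t)/N := by gcongr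
      _ = ((cntF (AA w t) N).card : ℝ)/N + δ t := by
          rw [add_div, mul_div_cancel_left₀ _ hNR.ne']
  have hIIle : ∀ t N, (cnt (AA w t) N : ℝ)/N ≤ f N + τ t := by
    intro t N
    rcases Nat.eq_zero_or_pos N with rfl | hN
    · have h1 : f 0 = 0 := by rw [hfdef]; simp
      have h2 : (cnt (AA w t) 0 : ℝ)/((0:ℕ):ℝ) = 0 := by simp
      rw [h1, h2, zero_add]
      exact hτ0 t
    · have hNR : (0:ℝ) < N := by exact_mod_cast hN
      have h := hII t N
      rw [hfdef]
      show _ ≤ (cnt G N : ℝ)/N + τ t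
      rw [cnt_eq, cnt_eq]
      calc ((cntF (AA w t) N).card : ℝ)/N ≤ (((cntF G N).card : ℝ) + N * τ t)/N := by gcongr
      _ = ((cntF G N).card : ℝ)/N + τ t := by
          rw [add_div, mul_div_cancel_left₀ _ hNR.ne']
  have hLle : ∀ t, L ≤ dA t + δ t := by
    intro t
    have htend : Tendsto (fun N : ℕ => (cnt (AA w t) N : ℝ)/N + δ t) atTop (𝓝 (dA t + δ t)) :=
      (hdA t).add_const _
    have hup := limsup_le_limsup (Filter.Eventually.of_forall (hIle t)) hcob_le
      htend.isBoundedUnder_le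
    rwa [htend.limsup_eq] at hup
  have hlge : ∀ t, dA t - τ t ≤ l := by
    intro t
    have htend : Tendsto (fun N : ℕ => (cnt (AA w t) N : ℝ)/N - τ t) atTop (𝓝 (dA t - τ t)) :=
      (hdA t).sub_const _
    have hlow := liminf_le_liminf (Filter.Eventually.of_forall
        (fun N => by have := hIIle t N; linarith :
          ∀ N : ℕ, (cnt (AA w t) N : ℝ)/N - τ t ≤ f N))
      htend.isBoundedUnder_ge hcob_ge
    rwa [htend.liminf_eq] at hlow
  have hlL : l ≤ L := liminf_le_limsup hbdd_le hbdd_ge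
  have hLl : L ≤ l := by
    have hδτ : ∀ t : ℕ, L - l ≤ δ t + τ t := fun t => by
      have h1 := hLle t
      have h2 := hlge t
      linarith
    have htend : Tendsto (fun t : ℕ => δ t + τ t) atTop (𝓝 0) := by
      simpa using hδtend.add hτtend
    have h0 := ge_of_tendsto' htend hδτ
    linarith
  have hfL : Tendsto f atTop (𝓝 L) := by
    apply tendsto_of_liminf_eq_limsup _ rfl hbdd_le hbdd_ge
    exact le_antisymm hlL hLl
  obtain ⟨t₁, ht₁0, hτt₁⟩ : ∃ t₁, t₀ ≤ t₁ ∧ τ t₁ < 1/(2*(M:ℝ)) := by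
    have hpos : (0:ℝ) < 1/(2*(M:ℝ)) := by positivity
    have h1 := hτtend.eventually (gt_mem_nhds hpos)
    obtain ⟨t₁, h⟩ := (h1.and (eventually_ge_atTop t₀)).exists
    exact ⟨t₁, h.2, h.1⟩
  have hLpos : 0 < L := by
    have h1 := hlge t₁
    have h2 := hIII t₁ ht₁0
    have hm : (0:ℝ) < 1/(M:ℝ) := by positivity
    have h3 : 1/(2*(M:ℝ)) ≤ 1/(M:ℝ) * (1 - τ t₀) := by
      have heq : 1/(M:ℝ) * (1/2) = 1/(2*(M:ℝ)) := by ring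
      have hmul := mul_le_mul_of_nonneg_left (by linarith : (1/2:ℝ) ≤ 1 - τ t₀) (le_of_lt hm)
      linarith
    calc (0:ℝ) < 1/(2*(M:ℝ)) - τ t₁ := by linarith
    _ ≤ dA t₁ - τ t₁ := by linarith
    _ ≤ l := h1
    _ ≤ L := hlL
  exact ⟨L, hLpos, hfL⟩
end

section
/- If g is a multiplicative arithmetic function, then the asymptotic density of supp(g) satisfies d(supp(g)) ≥ (6/π²)·∏_{p ∉ supp(g)} (1 + 1/p)^{-1}. -/
/-!
Put `m p = p` at the primes where `g` vanishes and `m p = p ^ 2` at the other primes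
(`siftModulus`). A positive integer divisible by no `m p` is squarefree and all its prime
factors lie outside the zero set of `g`, so `g` does not vanish there. The moduli `m p` are
pairwise coprime; Legendre's sieve over a finite set of them, together with a union bound over
the others (which needs `∑ 1 / m p < ∞`), shows that these integers have lower density at least
`∏ₚ (1 - 1 / m p)`. Since `1 - 1 / p = (1 - 1 / p ^ 2) * (1 + 1 / p)⁻¹`, the Euler product for
`ζ(2) = π ^ 2 / 6` turns this product into the claimed bound. When `∑ 1 / p` over the zero set
diverges, that bound is `0`.
-/

open Filter Topology ArithmeticFunction

open Finset Function

variable {ι : Type*}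

theorem Finset.one_add_sum_le_prod_one_add {R : Type*} [CommSemiring R] [PartialOrder R]
    [IsOrderedRing R] (s : Finset ι) {f : ι → R} (hf : ∀ i ∈ s, 0 ≤ f i) :
    1 + ∑ i ∈ s, f i ≤ ∏ i ∈ s, (1 + f i) := by
  classical
  induction s using Finset.induction_on with
  | empty => simp
  | insert a s ha ih =>
    have hs : ∀ i ∈ s, 0 ≤ f i := fun i hi => hf i (mem_insert_of_mem hi)
    have ha0 : 0 ≤ f a := hf a (mem_insert_self a s)
    rw [sum_insert ha, prod_insert ha]
    calc 1 + (f a + ∑ i ∈ s, f i)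
        ≤ 1 + (f a + ∑ i ∈ s, f i) + f a * ∑ i ∈ s, f i :=
          le_add_of_nonneg_right (mul_nonneg ha0 (sum_nonneg hs))
      _ = (1 + f a) * (1 + ∑ i ∈ s, f i) := by ring
      _ ≤ (1 + f a) * ∏ i ∈ s, (1 + f i) := by gcongr; exacts [add_nonneg zero_le_one ha0, ih hs]

theorem hasProd_inv_one_add_zero_of_not_summable {f : ι → ℝ} (hf : ∀ i, 0 ≤ f i)
    (hns : ¬ Summable f) : HasProd (fun i => (1 + f i)⁻¹) 0 := by
  have hsum : Tendsto (fun s : Finset ι => ∑ i ∈ s, f i) atTop atTop := by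
    refine tendsto_atTop_atTop_of_monotone
      (fun s t hst => sum_le_sum_of_subset_of_nonneg hst fun i _ _ => hf i) fun b => ?_
    by_contra! h
    exact hns (summable_of_sum_le hf fun s => (h s).le)
  refine tendsto_of_tendsto_of_tendsto_of_le_of_le tendsto_const_nhds
    (tendsto_inv_atTop_zero.comp (tendsto_atTop_add_const_left _ 1 hsum))
    (fun s => ?_) (fun s => ?_)
  · exact prod_nonneg fun i _ => by have := hf i; positivity
  · simp only [Function.comp_apply, prod_inv_distrib]
    exact inv_anti₀ (by have := sum_nonneg fun i (_ : i ∈ s) => hf i; positivity)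
      (one_add_sum_le_prod_one_add s fun i _ => hf i)

theorem multipliable_inv_one_add {f : ι → ℝ} (hf0 : ∀ i, 0 ≤ f i) (hf : Summable f) :
    Multipliable fun i => (1 + f i)⁻¹ :=
  (Real.multipliable_one_add_of_summable hf).inv₀
    (tprod_one_add_ne_zero_of_summable (fun i => by have := hf0 i; positivity) hf.norm)

theorem Nat.forall_dvd_iff_prod_dvd {m : ι → ℕ} {t : Finset ι}
    (hm : (t : Set ι).Pairwise (Nat.Coprime on m)) {n : ℕ} :
    (∀ i ∈ t, m i ∣ n) ↔ ∏ i ∈ t, m i ∣ n :=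
  ⟨prod_dvd_of_isRelPrime (hm.mono' fun _ _ h => Nat.coprime_iff_isRelPrime.mp h),
    fun h _ hi => (dvd_prod_of_mem m hi).trans h⟩

theorem card_filter_forall_not_dvd_eq {R : Type*} [CommRing R] (m : ι → ℕ) (s : Finset ι)
    (hm : (s : Set ι).Pairwise (Nat.Coprime on m)) (N : ℕ) :
    (#{n ∈ Ioc 0 N | ∀ i ∈ s, ¬ m i ∣ n} : R) =
      ∑ t ∈ s.powerset, (-1) ^ #t * ((N / ∏ i ∈ t, m i : ℕ) : R) := by
  classical
  calc (#{n ∈ Ioc 0 N | ∀ i ∈ s, ¬ m i ∣ n} : R)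
      = ∑ n ∈ Ioc 0 N, ∏ i ∈ s, (1 - if m i ∣ n then 1 else 0 : R) := by
        rw [card_filter, Nat.cast_sum]
        refine sum_congr rfl fun n _ => ?_
        rw [← prod_boole]
        push_cast
        exact prod_congr rfl fun i _ => by split_ifs <;> simp
    _ = ∑ n ∈ Ioc 0 N, ∑ t ∈ s.powerset, (-1) ^ #t * if ∏ i ∈ t, m i ∣ n then 1 else 0 := by
        refine sum_congr rfl fun n _ => ?_
        rw [prod_sub]
        refine sum_congr rfl fun t ht => ?_
        rw [prod_const_one, mul_one, prod_boole]
        exact congrArg _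
          (if_congr (Nat.forall_dvd_iff_prod_dvd (hm.mono (mem_powerset.mp ht))) rfl rfl)
    _ = _ := by
        rw [sum_comm]
        refine sum_congr rfl fun t _ => ?_
        rw [← mul_sum, sum_boole, Nat.Ioc_filter_dvd_card_eq_div]

theorem abs_natCast_div_sub_div_le_one (N q : ℕ) : |((N / q : ℕ) : ℝ) - N / q| ≤ 1 := by
  rw [← Nat.floor_div_eq_div (K := ℝ), abs_sub_le_iff]
  have hx : (0 : ℝ) ≤ N / q := by positivity
  constructor <;> linarith [Nat.floor_le hx, Nat.lt_floor_add_one ((N : ℝ) / q)]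

theorem abs_card_filter_forall_not_dvd_sub_le (m : ι → ℕ) (s : Finset ι)
    (hm : (s : Set ι).Pairwise (Nat.Coprime on m)) (N : ℕ) :
    |(#{n ∈ Ioc 0 N | ∀ i ∈ s, ¬ m i ∣ n} : ℝ) - N * ∏ i ∈ s, (1 - 1 / (m i : ℝ))| ≤ 2 ^ #s := by
  classical
  have hcount : (#{n ∈ Ioc 0 N | ∀ i ∈ s, ¬ m i ∣ n} : ℝ) =
      ∑ t ∈ s.powerset, (-1) ^ #t * ((N / ∏ i ∈ t, m i : ℕ) : ℝ) :=
    card_filter_forall_not_dvd_eq m s hm N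
  have hmain : (N : ℝ) * ∏ i ∈ s, (1 - 1 / (m i : ℝ)) =
      ∑ t ∈ s.powerset, (-1) ^ #t * ((N : ℝ) / ((∏ i ∈ t, m i : ℕ) : ℝ)) := by
    rw [prod_sub, mul_sum]
    refine sum_congr rfl fun t _ => ?_
    simp only [prod_const_one, mul_one, Nat.cast_prod, prod_div_distrib]
    ring
  rw [hcount, hmain, ← sum_sub_distrib]
  calc _ ≤ ∑ t ∈ s.powerset, |(-1 : ℝ) ^ #t * ((N / ∏ i ∈ t, m i : ℕ) : ℝ) -
          (-1) ^ #t * ((N : ℝ) / ((∏ i ∈ t, m i : ℕ) : ℝ))| := abs_sum_le_sum_abs _ _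
    _ ≤ ∑ _t ∈ s.powerset, 1 := sum_le_sum fun t _ => by
          rw [← mul_sub, abs_mul, abs_pow, abs_neg, abs_one, one_pow, one_mul]
          exact abs_natCast_div_sub_div_le_one _ _
    _ = 2 ^ #s := by simp

theorem card_filter_exists_dvd_le (m : ι → ℕ) (t : Finset ι) (N : ℕ) :
    (#{n ∈ Ioc 0 N | ∃ i ∈ t, m i ∣ n} : ℝ) ≤ N * ∑ i ∈ t, 1 / (m i : ℝ) := by
  have hsub : {n ∈ Ioc 0 N | ∃ i ∈ t, m i ∣ n} ⊆ t.biUnion fun i => {n ∈ Ioc 0 N | m i ∣ n} := by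
    intro n hn
    simp only [mem_filter, mem_biUnion] at hn ⊢
    obtain ⟨hn, i, hi, hdvd⟩ := hn
    exact ⟨i, hi, hn, hdvd⟩
  calc (#{n ∈ Ioc 0 N | ∃ i ∈ t, m i ∣ n} : ℝ)
      ≤ ∑ i ∈ t, (#{n ∈ Ioc 0 N | m i ∣ n} : ℝ) := by
        exact_mod_cast (card_le_card hsub).trans card_biUnion_le
    _ ≤ ∑ i ∈ t, N * (1 / (m i : ℝ)) := sum_le_sum fun i _ => by
        rw [Nat.Ioc_filter_dvd_card_eq_div, mul_one_div]
        exact Nat.cast_div_le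
    _ = N * ∑ i ∈ t, 1 / (m i : ℝ) := (mul_sum ..).symm

theorem cnt_eq_card_filter (A : Set ℕ) [DecidablePred (· ∈ A)] (N : ℕ) :
    cnt A N = #{n ∈ Ioc 0 N | n ∈ A} := by
  rw [cnt, ← Set.ncard_coe_finset]
  congr 1
  ext n
  simp only [Set.mem_inter_iff, Set.mem_Icc, coe_filter, mem_Ioc, Set.mem_ofPred_eq,
    Nat.one_le_iff_ne_zero, Nat.pos_iff_ne_zero]
  tauto

theorem le_cnt_of_forall_not_dvd_subset {m : ι → ℕ} (hm : Pairwise (Nat.Coprime on m))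
    (hf : Summable fun i => 1 / (m i : ℝ)) {A : Set ℕ} (hA : {n | ∀ i, ¬ m i ∣ n} ⊆ A)
    (s : Finset ι) (N : ℕ) :
    N * ∏ i ∈ s, (1 - 1 / (m i : ℝ)) - 2 ^ #s -
      N * (∑' i, 1 / (m i : ℝ) - ∑ i ∈ s, 1 / (m i : ℝ)) ≤ cnt A N := by
  classical
  -- only moduli `≤ N` divide some `n ∈ (0, N]`, and summability leaves finitely many of them
  have hlarge : {i | ¬ 1 / (m i : ℝ) < 1 / (N + 1)}.Finite :=
    eventually_cofinite.mp (hf.tendsto_cofinite_zero.eventually (gt_mem_nhds (by positivity)))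
  set t := hlarge.toFinset \ s
  have hsplit : {n ∈ Ioc 0 N | ∀ i ∈ s, ¬ m i ∣ n} ⊆
      {n ∈ Ioc 0 N | n ∈ A} ∪ {n ∈ Ioc 0 N | ∃ i ∈ t, m i ∣ n} := by
    intro n hn
    rw [mem_filter] at hn
    by_cases hnA : n ∈ A
    · exact mem_union_left _ (mem_filter.mpr ⟨hn.1, hnA⟩)
    obtain ⟨i, hi⟩ : ∃ i, m i ∣ n := by
      by_contra! h
      exact hnA (hA h)
    refine mem_union_right _
      (mem_filter.mpr ⟨hn.1, i, mem_sdiff.mpr ⟨?_, fun his => hn.2 i his hi⟩, hi⟩)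
    obtain ⟨hn0, hnN⟩ := mem_Ioc.mp hn.1
    have hmi : (0 : ℝ) < m i := by exact_mod_cast Nat.pos_of_dvd_of_pos hi hn0
    have hmiN : (m i : ℝ) ≤ N + 1 := by
      exact_mod_cast (Nat.le_of_dvd hn0 hi).trans (hnN.trans N.le_succ)
    rw [Set.Finite.mem_toFinset, Set.mem_ofPred_eq, not_lt]
    exact one_div_le_one_div_of_le hmi hmiN
  have htail : ∑ i ∈ t, 1 / (m i : ℝ) ≤ ∑' i, 1 / (m i : ℝ) - ∑ i ∈ s, 1 / (m i : ℝ) := by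
    rw [le_sub_iff_add_le, ← sum_union sdiff_disjoint]
    exact hf.sum_le_tsum _ fun i _ => by positivity
  have hcard : (#{n ∈ Ioc 0 N | ∀ i ∈ s, ¬ m i ∣ n} : ℝ) ≤
      #{n ∈ Ioc 0 N | n ∈ A} + #{n ∈ Ioc 0 N | ∃ i ∈ t, m i ∣ n} := by
    exact_mod_cast (card_le_card hsplit).trans (card_union_le _ _)
  have hsieve := (abs_le.mp (abs_card_filter_forall_not_dvd_sub_le m s (hm.set_pairwise _) N)).1
  have hexc := card_filter_exists_dvd_le m t N
  have htail' := mul_le_mul_of_nonneg_left htail (Nat.cast_nonneg (α := ℝ) N)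
  rw [cnt_eq_card_filter]
  linarith

theorem tprod_le_of_hasDensity {m : ι → ℕ} (hm : Pairwise (Nat.Coprime on m))
    (hf : Summable fun i => 1 / (m i : ℝ)) {A : Set ℕ} (hA : {n | ∀ i, ¬ m i ∣ n} ⊆ A)
    {d : ℝ} (hd : HasDensity A d) : ∏' i, (1 - 1 / (m i : ℝ)) ≤ d := by
  have hfinite : ∀ s : Finset ι, ∏ i ∈ s, (1 - 1 / (m i : ℝ)) -
      (∑' i, 1 / (m i : ℝ) - ∑ i ∈ s, 1 / (m i : ℝ)) ≤ d := by
    intro s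
    have hlim : Tendsto (fun N : ℕ => ∏ i ∈ s, (1 - 1 / (m i : ℝ)) - 2 ^ #s / (N : ℝ) -
        (∑' i, 1 / (m i : ℝ) - ∑ i ∈ s, 1 / (m i : ℝ))) atTop
        (𝓝 (∏ i ∈ s, (1 - 1 / (m i : ℝ)) - 0 - (∑' i, 1 / (m i : ℝ) - ∑ i ∈ s, 1 / (m i : ℝ)))) :=
      (tendsto_const_nhds.sub (tendsto_const_div_atTop_nhds_zero_nat _)).sub tendsto_const_nhds
    rw [sub_zero] at hlim
    refine le_of_tendsto_of_tendsto hlim hd (eventually_atTop.mpr ⟨1, fun N hN => ?_⟩)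
    have hN : (0 : ℝ) < N := by exact_mod_cast hN
    rw [le_div_iff₀ hN]
    have := le_cnt_of_forall_not_dvd_subset hm hf hA s N
    calc _ = N * ∏ i ∈ s, (1 - 1 / (m i : ℝ)) - 2 ^ #s -
          N * (∑' i, 1 / (m i : ℝ) - ∑ i ∈ s, 1 / (m i : ℝ)) := by field_simp
      _ ≤ cnt A N := this
  have hprod : Multipliable fun i => 1 - 1 / (m i : ℝ) := by
    simpa [← sub_eq_add_neg] using Real.multipliable_one_add_of_summable hf.neg
  have hlim := hprod.hasProd.sub ((tendsto_const_nhds (x := ∑' i, 1 / (m i : ℝ))).sub hf.hasSum)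
  rw [sub_self, sub_zero] at hlim
  exact le_of_tendsto' hlim hfinite

theorem hasProd_one_sub_inv_sq_primes :
    HasProd (fun p : Nat.Primes => 1 - ((p : ℝ) ^ 2)⁻¹) (6 / Real.pi ^ 2) := by
  let F : ℕ →*₀ ℝ := invMonoidWithZeroHom.comp
    ((powMonoidWithZeroHom two_ne_zero).comp (Nat.castRingHom ℝ).toMonoidWithZeroHom)
  have hF : ∀ n, F n = ((n : ℝ) ^ 2)⁻¹ := fun _ => rfl
  have hsum : Summable fun n => ‖F n‖ := by simp [hF]
  have hzeta : ∑' n, F n = Real.pi ^ 2 / 6 := by simpa [hF] using hasSum_zeta_two.tsum_eq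
  have := (EulerProduct.eulerProduct_completely_multiplicative_hasProd hsum).inv₀
    (by rw [hzeta]; positivity)
  rw [hzeta, inv_div] at this
  simpa [hF] using this

@[to_additive]
theorem hasProd_subtype_prime_and_iff {M : Type*} [CommMonoid M] [TopologicalSpace M]
    {P : ℕ → Prop} [DecidablePred P] {f : ℕ → M} {a : M} :
    HasProd (fun p : {p : ℕ // p.Prime ∧ P p} => f p) a ↔
      HasProd (fun p : Nat.Primes => if P p then f p else 1) a := by
  have hind : (fun p : Nat.Primes => if P p then f p else 1) =
      Set.mulIndicator {p : Nat.Primes | P p} (fun p => f p) := by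
    ext p
    simp [Set.mulIndicator_apply]
  rw [hind, ← hasProd_subtype_iff_mulIndicator]
  exact ((Equiv.subtypeSubtypeEquivSubtypeInter Nat.Prime P).hasProd_iff
    (f := fun p : {p : ℕ // p.Prime ∧ P p} => f p)).symm

section SiftModulus

variable (P : ℕ → Prop) [DecidablePred P]

def siftModulus (p : ℕ) : ℕ := if P p then p else p ^ 2

theorem siftModulus_dvd_sq (p : ℕ) : siftModulus P p ∣ p ^ 2 := by
  unfold siftModulus
  split_ifs
  exacts [dvd_pow_self p two_ne_zero, dvd_rfl]

theorem pairwise_coprime_siftModulus :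
    Pairwise (Nat.Coprime on fun p : Nat.Primes => siftModulus P p) := by
  intro p q hpq
  have h := (Nat.coprime_primes p.2 q.2).mpr (Subtype.coe_ne_coe.mpr hpq)
  simp only [Function.onFun, siftModulus]
  split_ifs
  exacts [h, h.pow_right 2, h.pow_left 2, h.pow 2 2]

theorem one_div_siftModulus_le (p : ℕ) :
    1 / (siftModulus P p : ℝ) ≤ 1 / (p : ℝ) ^ 2 + if P p then 1 / (p : ℝ) else 0 := by
  unfold siftModulus
  split_ifs
  · have : 0 ≤ 1 / (p : ℝ) ^ 2 := by positivity
    linarith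
  · simp

theorem one_sub_one_div_siftModulus {p : ℕ} (hp : p ≠ 0) :
    1 - 1 / (siftModulus P p : ℝ) =
      (1 - ((p : ℝ) ^ 2)⁻¹) * if P p then (1 + 1 / (p : ℝ))⁻¹ else 1 := by
  have hp' : (p : ℝ) ≠ 0 := Nat.cast_ne_zero.mpr hp
  unfold siftModulus
  split_ifs
  · field_simp
    ring
  · simp

variable {P}

theorem summable_one_div_siftModulus
    (hP : Summable fun p : {p : ℕ // p.Prime ∧ P p} => 1 / (p : ℝ)) :
    Summable fun p : Nat.Primes => 1 / (siftModulus P p : ℝ) := by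
  have hsq : Summable fun p : Nat.Primes => 1 / (p : ℝ) ^ 2 :=
    (Real.summable_one_div_nat_pow.mpr one_lt_two).comp_injective Subtype.val_injective
  have hzero := (hasSum_subtype_prime_and_iff (P := P) (f := fun p => 1 / (p : ℝ))).mp hP.hasSum
  exact (hsq.add hzero.summable).of_nonneg_of_le (fun p => by positivity)
    fun p => one_div_siftModulus_le P p

theorem hasProd_one_sub_one_div_siftModulus
    (hP : Summable fun p : {p : ℕ // p.Prime ∧ P p} => 1 / (p : ℝ)) :
    HasProd (fun p : Nat.Primes => 1 - 1 / (siftModulus P p : ℝ))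
      (6 / Real.pi ^ 2 * ∏' p : {p : ℕ // p.Prime ∧ P p}, (1 + 1 / (p : ℝ))⁻¹) := by
  have hinv := (hasProd_subtype_prime_and_iff (P := P) (f := fun p => (1 + 1 / (p : ℝ))⁻¹)).mp
    (multipliable_inv_one_add (fun p => by positivity) hP).hasProd
  convert hasProd_one_sub_inv_sq_primes.mul hinv using 1
  exact funext fun p => one_sub_one_div_siftModulus P p.2.ne_zero

end SiftModulus

namespace ArithmeticFunction.IsMultiplicative

theorem apply_ne_zero_of_squarefree {R : Type*} [CommMonoidWithZero R]
    [NoZeroDivisors R] [Nontrivial R] {g : ArithmeticFunction R} (hg : g.IsMultiplicative)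
    {n : ℕ} (hn : Squarefree n) (hgp : ∀ p ∈ n.primeFactors, g p ≠ 0) : g n ≠ 0 := by
  rw [← hg.prod_primeFactors hn]
  exact prod_ne_zero_iff.mpr hgp

theorem setOf_forall_not_siftModulus_dvd_subset {R : Type*}
    [CommMonoidWithZero R] [NoZeroDivisors R] [Nontrivial R] [DecidableEq R]
    {g : ArithmeticFunction R} (hg : g.IsMultiplicative) :
    {n | ∀ p : Nat.Primes, ¬ siftModulus (g · = 0) p ∣ n} ⊆ {n | g n ≠ 0} := by
  intro n hn
  refine hg.apply_ne_zero_of_squarefree ?_ fun p hp hgp => ?_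
  · refine Nat.squarefree_iff_prime_squarefree.mpr fun p hp hsq => hn ⟨p, hp⟩ ?_
    exact (siftModulus_dvd_sq _ p).trans (by rwa [sq])
  · refine hn ⟨p, Nat.prime_of_mem_primeFactors hp⟩ ?_
    simpa [siftModulus, hgp] using Nat.dvd_of_mem_primeFactors hp

end ArithmeticFunction.IsMultiplicative

theorem density_lower_bound
    (g : ArithmeticFunction ℂ) (hg : g.IsMultiplicative)
    (d : ℝ) (hd : HasDensity {n : ℕ | g n ≠ 0} d) :
    d ≥ 6 / Real.pi ^ 2 *
      ∏' p : {p : ℕ // p.Prime ∧ g p = 0}, (1 + 1 / ((p : ℕ) : ℝ))⁻¹ := by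
  by_cases hP : Summable fun p : {p : ℕ // p.Prime ∧ g p = 0} => 1 / (p : ℝ)
  · rw [ge_iff_le, ← (hasProd_one_sub_one_div_siftModulus hP).tprod_eq]
    exact tprod_le_of_hasDensity (pairwise_coprime_siftModulus _) (summable_one_div_siftModulus hP)
      hg.setOf_forall_not_siftModulus_dvd_subset hd
  · rw [(hasProd_inv_one_add_zero_of_not_summable (fun p => by positivity) hP).tprod_eq, mul_zero]
    exact ge_of_tendsto' hd fun N => by positivity
end
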